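/- arXiv:2501.11393 — 3 statements merged into one kernel-verified Lean document; each statement's English description precedes it below -/
import Mathlib

section
/- Let x be a binary sequence of length n ≥ 1 and let x̌ = x‖x̄ be the concatenation of x with its bitwise complement (of length 2n). Then α_{x̌} = 2α_x + γ_x + (1/2)^n·δ_x, where the coefficients of x̌ are computed with respect to its length 2n. -/
open Finset

/-- The coefficient `α_x`. -/
noncomputable def alphaC {n : ℕ} (x : Fin n → Bool) : ℝ :=
  (∑ i ∈ univ.filter (fun i : Fin n => x i = false),
     ∑ j ∈ univ.filter (fun j : Fin n => x j = false ∧ i < j),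
       ((1:ℝ)/2) ^ ((j : ℕ) - (i : ℕ)))
  + ∑ i ∈ univ.filter (fun i : Fin n => x i = true),
      ∑ j ∈ univ.filter (fun j : Fin n => x j = true ∧ i < j),
        ((1:ℝ)/2) ^ ((j : ℕ) - (i : ℕ))

/-- The coefficient `β_x`. -/
noncomputable def betaC {n : ℕ} (x : Fin n → Bool) : ℝ :=
  (∑ i ∈ univ.filter (fun i : Fin n => x i = false),
     ∑ j ∈ univ.filter (fun j : Fin n => x j = false ∧ i < j),
       ((1:ℝ)/2) ^ (n - ((j : ℕ) - (i : ℕ))))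
  + ∑ i ∈ univ.filter (fun i : Fin n => x i = true),
      ∑ j ∈ univ.filter (fun j : Fin n => x j = true ∧ i < j),
        ((1:ℝ)/2) ^ (n - ((j : ℕ) - (i : ℕ)))

/-- The coefficient `γ_x`. -/
noncomputable def gammaC {n : ℕ} (x : Fin n → Bool) : ℝ :=
  (∑ i ∈ univ.filter (fun i : Fin n => x i = false),
     ∑ j ∈ univ.filter (fun j : Fin n => x j = true ∧ i < j),
       ((1:ℝ)/2) ^ (n - ((j : ℕ) - (i : ℕ))))
  + ∑ i ∈ univ.filter (fun i : Fin n => x i = true),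
      ∑ j ∈ univ.filter (fun j : Fin n => x j = false ∧ i < j),
        ((1:ℝ)/2) ^ (n - ((j : ℕ) - (i : ℕ)))

/-- The coefficient `δ_x`. -/
noncomputable def deltaC {n : ℕ} (x : Fin n → Bool) : ℝ :=
  (∑ i ∈ univ.filter (fun i : Fin n => x i = false),
     ∑ j ∈ univ.filter (fun j : Fin n => x j = true ∧ i < j),
       ((1:ℝ)/2) ^ ((j : ℕ) - (i : ℕ)))
  + ∑ i ∈ univ.filter (fun i : Fin n => x i = true),
      ∑ j ∈ univ.filter (fun j : Fin n => x j = false ∧ i < j),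
        ((1:ℝ)/2) ^ ((j : ℕ) - (i : ℕ))

/-!
Split the pairs of positions of `x‖x̄` into those inside the first half, inside the second half,
and across. Complementing preserves equality of bits, so each half contributes `α_x`. A crossing
pair `(i, n + j)` carries equal bits exactly when `x i ≠ x j`, and its gap is `n + j - i`: for
`i < j` this is `n + (j - i)`, giving `(1/2)^n δ_x`, and for `j < i` it is `n - (i - j)`, giving `γ_x`.
-/

section PairSums

variable {ι M : Type*} [LinearOrder ι] [Fintype ι] [LocallyFiniteOrderTop ι] [AddCommMonoid M]

lemma sum_filter_false_add_sum_filter_true (y : ι → Bool) (g : Bool → Bool) (f : ι → ι → M) :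
    (∑ i ∈ univ.filter (fun i => y i = false),
        ∑ j ∈ univ.filter (fun j => y j = g false ∧ i < j), f i j)
      + ∑ i ∈ univ.filter (fun i => y i = true),
        ∑ j ∈ univ.filter (fun j => y j = g true ∧ i < j), f i j
      = ∑ i, ∑ j ∈ Ioi i, if y j = g (y i) then f i j else 0 := by
  rw [← sum_filter_add_sum_filter_not univ (fun i => y i = false)]
  congr 1 <;> refine sum_congr (by ext; simp) fun i hi => ?_ <;>
    simp only [mem_filter, mem_univ, true_and, Bool.not_eq_false] at hi <;>
    simp only [← filter_lt_eq_Ioi, sum_filter, hi, ite_and] <;>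
    exact sum_congr rfl fun j _ => by split_ifs <;> rfl

lemma sum_sum_eq_sum_sum_Ioi_add_swap (F : ι → ι → M) (hF : ∀ i, F i i = 0) :
    ∑ i, ∑ j, F i j = ∑ i, ∑ j ∈ Ioi i, (F i j + F j i) := by
  have split_lt_gt (i j : ι) :
      F i j = (if i < j then F i j else 0) + (if j < i then F i j else 0) := by
    rcases lt_trichotomy i j with h | rfl | h
    · simp [h, h.not_gt]
    · simp [hF]
    · simp [h, h.not_gt]
  conv_lhs => rw [sum_congr rfl fun i _ => sum_congr rfl fun j _ => split_lt_gt i j]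
  simp only [← filter_lt_eq_Ioi, sum_filter, sum_add_distrib]
  rw [sum_comm (f := fun i j => if j < i then F i j else 0)]

end PairSums

lemma Fin.sum_sum_Ioi_castAdd_natAdd {M : Type*} [AddCommMonoid M] {n : ℕ}
    (F : Fin (n + n) → Fin (n + n) → M) :
    ∑ i, ∑ j ∈ Ioi i, F i j
      = ∑ i, ∑ j ∈ Ioi i, F (castAdd n i) (castAdd n j)
        + ∑ i, ∑ j, F (castAdd n i) (natAdd n j)
        + ∑ i, ∑ j ∈ Ioi i, F (natAdd n i) (natAdd n j) := by
  have castAdd_lt_natAdd (i j : Fin n) : castAdd n i < natAdd n j := by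
    simp only [lt_def, val_castAdd, val_natAdd]; omega
  have natAdd_not_lt_castAdd (i j : Fin n) : ¬ natAdd n i < castAdd n j := by
    simp only [lt_def, val_castAdd, val_natAdd]; omega
  simp only [← filter_lt_eq_Ioi, sum_filter, sum_univ_add, (strictMono_castAdd n).lt_iff_lt,
    natAdd_lt_natAdd_iff, castAdd_lt_natAdd, natAdd_not_lt_castAdd, if_true, if_false,
    sum_const_zero, sum_add_distrib]
  rw [add_zero, add_assoc]

lemma alphaC_eq_sum_Ioi {m : ℕ} (y : Fin m → Bool) :
    alphaC y = ∑ i, ∑ j ∈ Ioi i, if y j = y i then ((1:ℝ)/2) ^ ((j : ℕ) - (i : ℕ)) else 0 :=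
  sum_filter_false_add_sum_filter_true y id _

lemma gammaC_eq_sum_Ioi {m : ℕ} (y : Fin m → Bool) :
    gammaC y = ∑ i, ∑ j ∈ Ioi i,
      if y j = !y i then ((1:ℝ)/2) ^ (m - ((j : ℕ) - (i : ℕ))) else 0 :=
  sum_filter_false_add_sum_filter_true y not _

lemma deltaC_eq_sum_Ioi {m : ℕ} (y : Fin m → Bool) :
    deltaC y = ∑ i, ∑ j ∈ Ioi i, if y j = !y i then ((1:ℝ)/2) ^ ((j : ℕ) - (i : ℕ)) else 0 :=
  sum_filter_false_add_sum_filter_true y not _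

lemma gammaC_add_half_pow_mul_deltaC {n : ℕ} (x : Fin n → Bool) :
    gammaC x + ((1:ℝ)/2) ^ n * deltaC x
      = ∑ i, ∑ j, if (!x j) = x i then ((1:ℝ)/2) ^ (n + (j : ℕ) - i) else 0 := by
  rw [sum_sum_eq_sum_sum_Ioi_add_swap _ (by simp), gammaC_eq_sum_Ioi, deltaC_eq_sum_Ioi]
  simp_rw [mul_sum, ← sum_add_distrib]
  refine sum_congr rfl fun i _ => sum_congr rfl fun j hj => ?_
  have hij : (i : ℕ) < j := Fin.lt_def.mp (mem_Ioi.mp hj)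
  rw [Nat.add_sub_assoc hij.le, pow_add, show n + (i : ℕ) - j = n - (j - i) by omega]
  cases x i <;> cases x j <;> simp [add_comm]

theorem alpha_append_compl_general (n : ℕ) (x : Fin n → Bool) :
    alphaC (Fin.append x (fun i => !(x i))) =
      2 * alphaC x + gammaC x + ((1:ℝ)/2) ^ n * deltaC x := by
  rw [alphaC_eq_sum_Ioi, Fin.sum_sum_Ioi_castAdd_natAdd]
  simp only [Fin.append_left, Fin.append_right, Fin.val_castAdd, Fin.val_natAdd, Bool.not_inj_iff,
    Nat.add_sub_add_left]
  rw [← gammaC_add_half_pow_mul_deltaC, ← alphaC_eq_sum_Ioi]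
  ring

/-- Lemma 3(b): `α_{x‖x̄} = 2α_x + γ_x + (1/2)^n·δ_x`. -/
theorem alpha_append_compl (n : ℕ) (hn : 1 ≤ n) (x : Fin n → Bool) :
    alphaC (Fin.append x (fun i => !(x i))) =
      2 * alphaC x + gammaC x + ((1:ℝ)/2) ^ n * deltaC x :=
  alpha_append_compl_general n x
end

section
/- Let x be a binary sequence of length n ≥ 1 and let x̂ = x‖x be the concatenation of x with itself (of length 2n). Then β_{x̂} = β_x + (1/2)^{n−1}·β_x + (1/2)^n·α_x + n·(1/2)^n, where the coefficients of x̂ are computed with respect to its length 2n. -/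
open Finset

/-!
Both `α_x` and `β_x` are sums, over the pairs `i < j` of positions carrying equal letters, of a
weight depending only on the distance `j - i`. In `x‖x` a pair inside one copy has distance
`d < n` and weight `(1/2)^(2n-d) = (1/2)^n (1/2)^(n-d)`; the two copies give `(1/2)^(n-1) β_x`.
A pair `(i, n + j)` straddling the copies has distance `n + j - i`: for `i < j` its weight is
that of `(i, j)` in `β_x`, for `i = j` it is `(1/2)^n`, and for `i > j` it is `(1/2)^n` times
the weight of `(j, i)` in `α_x`.
-/

noncomputable def pairSum {α : Type*} [DecidableEq α] {n : ℕ} (x : Fin n → α) (w : ℕ → ℝ) : ℝ :=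
  ∑ i, ∑ j, if x i = x j ∧ i < j then w (j - i) else 0

noncomputable def crossPairSum {α : Type*} [DecidableEq α] {m n : ℕ} (x : Fin m → α)
    (y : Fin n → α) (w : ℕ → ℝ) : ℝ :=
  ∑ i, ∑ j, if x i = y j then w (m + j - i) else 0

section
variable {α : Type*} [DecidableEq α]

theorem pairSum_congr {n : ℕ} (x : Fin n → α) {w w' : ℕ → ℝ} (h : ∀ d < n, w d = w' d) :
    pairSum x w = pairSum x w' := by
  unfold pairSum
  refine sum_congr rfl fun i _ => sum_congr rfl fun j _ => ?_
  rw [h _ (by omega)]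

theorem pairSum_const_mul {n : ℕ} (x : Fin n → α) (c : ℝ) (w : ℕ → ℝ) :
    pairSum x (fun d => c * w d) = c * pairSum x w := by
  simp only [pairSum, mul_sum, mul_ite, mul_zero]

theorem pairSum_append {m n : ℕ} (x : Fin m → α) (y : Fin n → α) (w : ℕ → ℝ) :
    pairSum (Fin.append x y) w = pairSum x w + pairSum y w + crossPairSum x y w := by
  have hcross : ∀ (i : Fin m) (j : Fin n), Fin.castAdd n i < Fin.natAdd m j := fun i j => by
    rw [Fin.lt_def, Fin.val_castAdd, Fin.val_natAdd]; omega
  have hcross' : ∀ (i : Fin n) (j : Fin m), ¬ Fin.natAdd m i < Fin.castAdd n j := fun i j => by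
    rw [Fin.lt_def, Fin.val_castAdd, Fin.val_natAdd]; omega
  simp only [pairSum, crossPairSum, Fin.sum_univ_add, Fin.append_left, Fin.append_right,
    Fin.val_castAdd, Fin.val_natAdd, (Fin.strictMono_castAdd n).lt_iff_lt,
    Fin.natAdd_lt_natAdd_iff, hcross, hcross', and_true, and_false, if_false, sum_const_zero,
    add_zero, add_tsub_add_eq_tsub_left, sum_add_distrib]
  ring

theorem crossPairSum_self {n : ℕ} (x : Fin n → α) (w : ℕ → ℝ) :
    crossPairSum x x w =
      pairSum x (fun d => w (n + d)) + n * w n + pairSum x (fun d => w (n - d)) := by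
  have hsplit : ∀ i j : Fin n, (if x i = x j then w (n + j - i) else 0) =
      (if x i = x j ∧ i < j then w (n + (j - i)) else 0) + (if i = j then w n else 0)
        + (if x j = x i ∧ j < i then w (n - (i - j)) else 0) := fun i j => by
    have hi := i.isLt
    rcases lt_trichotomy i j with hij | rfl | hij
    · rw [show n + (j : ℕ) - i = n + (j - i) by omega]
      by_cases hx : x i = x j <;> simp [hx, hij, hij.ne, hij.not_gt]
    · simp
    · rw [show n + (j : ℕ) - i = n - (i - j) by omega]
      by_cases hx : x i = x j <;> simp [hx, hij, hij.ne', hij.not_gt, eq_comm (a := x j)]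
  simp only [crossPairSum, pairSum, hsplit, sum_add_distrib, sum_ite_eq, mem_univ, if_true,
    sum_const, card_univ, Fintype.card_fin, nsmul_eq_mul]
  rw [sum_comm (f := fun i j => if x j = x i ∧ j < i then w (n - (i - j)) else 0)]

end

theorem sum_sameColor_pairs {n : ℕ} (x : Fin n → Bool) (f : Fin n → Fin n → ℝ) :
    (∑ i ∈ univ.filter (fun i => x i = false), ∑ j ∈ univ.filter (fun j => x j = false ∧ i < j),
        f i j)
      + ∑ i ∈ univ.filter (fun i => x i = true), ∑ j ∈ univ.filter (fun j => x j = true ∧ i < j),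
        f i j
      = ∑ i, ∑ j, if x i = x j ∧ i < j then f i j else 0 := by
  simp only [sum_filter, ← sum_add_distrib]
  refine sum_congr rfl fun i _ => ?_
  cases x i <;> simp only [reduceCtorEq, if_true, if_false, add_zero, zero_add] <;>
    exact sum_congr rfl fun j _ => by cases x j <;> simp

theorem alphaC_eq_pairSum {n : ℕ} (x : Fin n → Bool) :
    alphaC x = pairSum x (fun d => (1 / 2 : ℝ) ^ d) :=
  sum_sameColor_pairs x _

theorem betaC_eq_pairSum {n : ℕ} (x : Fin n → Bool) :
    betaC x = pairSum x (fun d => (1 / 2 : ℝ) ^ (n - d)) :=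
  sum_sameColor_pairs x _

/-- Lemma 3(c): `β_{x‖x} = β_x + (1/2)^{n-1}·β_x + (1/2)^n·α_x + n·(1/2)^n`. -/
theorem beta_append_self (n : ℕ) (hn : 1 ≤ n) (x : Fin n → Bool) :
    betaC (Fin.append x x) =
      betaC x + ((1:ℝ)/2) ^ (n - 1) * betaC x + ((1:ℝ)/2) ^ n * alphaC x
        + (n : ℝ) * ((1:ℝ)/2) ^ n := by
  have hinner : pairSum x (fun d => (1 / 2 : ℝ) ^ (n + n - d))
      = (1 / 2) ^ n * pairSum x (fun d => (1 / 2 : ℝ) ^ (n - d)) := by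
    rw [← pairSum_const_mul]
    refine pairSum_congr x fun d hd => ?_
    rw [← pow_add]; congr 1; omega
  have hnear : pairSum x (fun d => (1 / 2 : ℝ) ^ (n + n - (n + d)))
      = pairSum x (fun d => (1 / 2 : ℝ) ^ (n - d)) :=
    pairSum_congr x fun d _ => by congr 1; omega
  have hfar : pairSum x (fun d => (1 / 2 : ℝ) ^ (n + n - (n - d)))
      = (1 / 2) ^ n * pairSum x (fun d => (1 / 2 : ℝ) ^ d) := by
    rw [← pairSum_const_mul]
    refine pairSum_congr x fun d hd => ?_
    rw [← pow_add]; congr 1; omega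
  have htwo : ((1:ℝ)/2) ^ (n - 1) = 2 * (1 / 2) ^ n := by
    obtain ⟨k, rfl⟩ := Nat.exists_eq_add_of_le' hn
    rw [Nat.add_sub_cancel, pow_succ]; ring
  rw [betaC_eq_pairSum, pairSum_append, crossPairSum_self, hinner, hnear, hfar,
    Nat.add_sub_cancel, betaC_eq_pairSum, alphaC_eq_pairSum, htwo]
  ring
end

section
/- Let x be a binary sequence of length n ≥ 1 and let x̂ = x‖x be the concatenation of x with itself (of length 2n). Then γ_{x̂} = γ_x + (1/2)^{n−1}·γ_x + (1/2)^n·δ_x, where the coefficients of x̂ are computed with respect to its length 2n. -/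
open Finset

/-!
Both `γ` and `δ` sum a weight depending only on the distance `j - i` over the discordant pairs
`i < j` (those with `x i ≠ x j`). In `x‖x`, a discordant pair inside one copy has distance
`d < n` and weight `(1/2)^(2n-d) = (1/2)^n (1/2)^(n-d)`, so each copy contributes
`(1/2)^n γ_x`. A pair `(a, n + b)` straddling the copies has distance `n + b - a`: the pairs
with `a < b` contribute `γ_x`, and those with `b < a` contribute `(1/2)^n δ_x`.
-/
noncomputable def discordantPairSum {m : ℕ} (x : Fin m → Bool) (f : ℕ → ℝ) : ℝ :=
  ∑ i, ∑ j, if x i ≠ x j ∧ i < j then f (j - i) else 0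

section discordantPairSum

variable {m : ℕ} (x : Fin m → Bool)

lemma sum_filter_add_sum_filter_eq_discordantPairSum (f : ℕ → ℝ) :
    ((∑ i ∈ univ.filter (fun i : Fin m => x i = false),
       ∑ j ∈ univ.filter (fun j : Fin m => x j = true ∧ i < j), f (j - i))
     + ∑ i ∈ univ.filter (fun i : Fin m => x i = true),
        ∑ j ∈ univ.filter (fun j : Fin m => x j = false ∧ i < j), f (j - i))
    = discordantPairSum x f := by
  rw [sum_filter, sum_filter, ← sum_add_distrib]
  refine sum_congr rfl fun i _ => ?_
  cases x i <;>
    simp only [sum_filter, Bool.false_eq_true, Bool.true_eq_false, if_true, if_false, add_zero,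
      zero_add] <;>
    exact sum_congr rfl fun j _ => by cases x j <;> simp

lemma gammaC_eq_discordantPairSum :
    gammaC x = discordantPairSum x fun d => (1 / 2 : ℝ) ^ (m - d) :=
  sum_filter_add_sum_filter_eq_discordantPairSum x fun d => (1 / 2 : ℝ) ^ (m - d)

lemma deltaC_eq_discordantPairSum :
    deltaC x = discordantPairSum x fun d => (1 / 2 : ℝ) ^ d :=
  sum_filter_add_sum_filter_eq_discordantPairSum x fun d => (1 / 2 : ℝ) ^ d

lemma discordantPairSum_add (f g : ℕ → ℝ) :
    discordantPairSum x (fun d => f d + g d) = discordantPairSum x f + discordantPairSum x g := by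
  simp only [discordantPairSum, ← sum_add_distrib, ← ite_add_zero]

lemma discordantPairSum_eq_mul_of_forall_lt {f g : ℕ → ℝ} (c : ℝ)
    (h : ∀ d < m, f d = c * g d) : discordantPairSum x f = c * discordantPairSum x g := by
  simp only [discordantPairSum, mul_sum, mul_ite, mul_zero]
  refine sum_congr rfl fun i _ => sum_congr rfl fun j _ => ?_
  exact if_ctx_congr Iff.rfl (fun _ => h _ (by omega)) fun _ => rfl

lemma sum_sum_ite_ne_eq_discordantPairSum (f : ℕ → ℝ) (k : ℕ) :
    (∑ a, ∑ b, if x a ≠ x b then f (k + b - a) else 0)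
      = discordantPairSum x fun d => f (k + d) + f (k - d) := by
  have split : ∀ a b, (if x a ≠ x b then f (k + b - a) else 0)
      = (if x a ≠ x b ∧ a < b then f (k + b - a) else 0)
        + if x b ≠ x a ∧ b < a then f (k + b - a) else 0 := by
    intro a b
    rcases lt_trichotomy a b with hab | rfl | hab
    · simp [hab, hab.not_gt, ne_comm]
    · simp
    · simp [hab, hab.not_gt, ne_comm]
  simp only [split, sum_add_distrib]
  rw [sum_comm (f := fun a b => if x b ≠ x a ∧ b < a then _ else _), ← sum_add_distrib]
  refine sum_congr rfl fun a _ => ?_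
  rw [← sum_add_distrib]
  refine sum_congr rfl fun b _ => ?_
  by_cases h : x a ≠ x b ∧ a < b
  · rw [if_pos h, if_pos h, if_pos h]
    have := Fin.lt_def.mp h.2
    congr 2 <;> omega
  · simp only [if_neg h, add_zero]

lemma discordantPairSum_append {n : ℕ} (y : Fin n → Bool) (f : ℕ → ℝ) :
    discordantPairSum (Fin.append x y) f
      = discordantPairSum x f + discordantPairSum y f
        + ∑ a, ∑ b, if x a ≠ y b then f (m + b - a) else 0 := by
  have left_lt_left (a b : Fin m) : Fin.castAdd n a < Fin.castAdd n b ↔ a < b := .rfl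
  have left_lt_right (a : Fin m) (b : Fin n) : Fin.castAdd n a < Fin.natAdd m b :=
    Fin.lt_def.mpr (by simp; omega)
  have right_not_lt_left (a : Fin n) (b : Fin m) : ¬ Fin.natAdd m a < Fin.castAdd n b :=
    fun h => by simp [Fin.lt_def] at h; omega
  simp only [discordantPairSum, Fin.sum_univ_add, Fin.append_left, Fin.append_right,
    left_lt_left, left_lt_right, right_not_lt_left, Fin.natAdd_lt_natAdd_iff, Fin.val_castAdd,
    Fin.val_natAdd, Nat.add_sub_add_left, and_true, and_false, if_false, sum_const_zero,
    add_zero, sum_add_distrib]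
  ring

end discordantPairSum

theorem gamma_append_self_general (n : ℕ) (x : Fin n → Bool) :
    gammaC (Fin.append x x) =
      gammaC x + ((1:ℝ)/2) ^ (n - 1) * gammaC x + ((1:ℝ)/2) ^ n * deltaC x := by
  have within_half : (discordantPairSum x fun d => (1 / 2 : ℝ) ^ (n + n - d))
      = (1 / 2) ^ n * gammaC x := by
    rw [gammaC_eq_discordantPairSum]
    exact discordantPairSum_eq_mul_of_forall_lt x _ fun d hd => by
      rw [← pow_add]; congr 1; omega
  have across_forward : (discordantPairSum x fun d => (1 / 2 : ℝ) ^ (n + n - (n + d)))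
      = gammaC x := by
    rw [gammaC_eq_discordantPairSum]
    congr with d
    congr 1
    omega
  have across_backward : (discordantPairSum x fun d => (1 / 2 : ℝ) ^ (n + n - (n - d)))
      = (1 / 2) ^ n * deltaC x := by
    rw [deltaC_eq_discordantPairSum]
    exact discordantPairSum_eq_mul_of_forall_lt x _ fun d hd => by
      rw [← pow_add]; congr 1; omega
  rw [gammaC_eq_discordantPairSum, discordantPairSum_append,
    sum_sum_ite_ne_eq_discordantPairSum x (fun d => (1 / 2 : ℝ) ^ (n + n - d)),
    discordantPairSum_add, within_half, across_forward, across_backward]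
  rcases n with _ | n
  · simp [gammaC]
  · rw [Nat.add_sub_cancel, pow_succ]
    ring

/-- Lemma 3(e): `γ_{x‖x} = γ_x + (1/2)^{n-1}·γ_x + (1/2)^n·δ_x`. -/
theorem gamma_append_self (n : ℕ) (hn : 1 ≤ n) (x : Fin n → Bool) :
    gammaC (Fin.append x x) =
      gammaC x + ((1:ℝ)/2) ^ (n - 1) * gammaC x + ((1:ℝ)/2) ^ n * deltaC x :=
  gamma_append_self_general n x
end
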